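/- Let ū ∈ U_ad be Pareto optimal, let r ∈ ℝ^k with r > 0, let t̄ ∈ ℝ, and set z := Ĵ(ū) − t̄ r. Then any global solution ũ ∈ U_ad of the reformulated Pascoletti–Serafini problem (RP^PS_{z,r}) satisfies Ĵ(ũ) = Ĵ(ū). -/

import Mathlib

/-- The Pascoletti–Serafini scalarization function
`u ↦ max_{1 ≤ i ≤ k} (Ĵ_i(u) − z_i) / r_i`, evaluated at the objective vector `y`. -/
noncomputable def psScal {k : ℕ} (hk : 0 < k) (z r : Fin k → ℝ) (y : Fin k → ℝ) : ℝ :=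
  Finset.univ.sup' (Finset.univ_nonempty_iff.mpr ⟨⟨0, hk⟩⟩) fun i => (y i - z i) / r i

/-- **Uniqueness of objective values for PS problems at Pareto optimal points.**
Let `ubar ∈ Uad` be Pareto optimal, let `r > 0`, `tbar ∈ ℝ` and set
`z := J(ubar) − tbar r`.  Then any global solution `ut ∈ Uad` of the reformulated
Pascoletti–Serafini problem `min_{u ∈ Uad} max_i (J_i(u) − z_i)/r_i` satisfies
`J(ut) = J(ubar)`. -/
theorem pareto_optimal_psProblem_solution_same_objective
    {U : Type*} [NormedAddCommGroup U] [InnerProductSpace ℝ U] [CompleteSpace U]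
    {k : ℕ} (hk : 2 ≤ k) (Uad : Set U) (hUad : Uad.Nonempty)
    (J : U → Fin k → ℝ)
    (ubar : U) (hubar : ubar ∈ Uad)
    (hpareto : ∀ v ∈ Uad, ¬ (J v ≤ J ubar ∧ J v ≠ J ubar))
    (r : Fin k → ℝ) (hr : ∀ i, 0 < r i) (tbar : ℝ)
    (ut : U) (hut : ut ∈ Uad)
    (hopt : ∀ u ∈ Uad,
      psScal (by omega) (fun i => J ubar i - tbar * r i) r (J ut) ≤
        psScal (by omega) (fun i => J ubar i - tbar * r i) r (J u)) :
    J ut = J ubar := by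
  have h1 := hopt ubar hubar
  have hub : psScal (by omega) (fun i => J ubar i - tbar * r i) r (J ubar) = tbar := by
    unfold psScal
    have : (fun i => (J ubar i - (J ubar i - tbar * r i)) / r i) = fun _ : Fin k => tbar := by
      funext i
      field_simp [(hr i).ne']
      ring
    rw [this, Finset.sup'_const]
  rw [hub] at h1
  have hle : J ut ≤ J ubar := by
    intro i
    have h2 : (J ut i - (J ubar i - tbar * r i)) / r i ≤ tbar := by
      refine le_trans ?_ h1
      exact Finset.le_sup' (f := fun i => (J ut i - (J ubar i - tbar * r i)) / r i)
        (Finset.mem_univ i)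
    rw [div_le_iff₀ (hr i)] at h2
    nlinarith [hr i]
  by_contra h
  exact hpareto ut hut ⟨hle, h⟩
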